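/- arXiv:2309.13477 — 2 statements merged into one kernel-verified Lean document; each statement's English description precedes it below -/
import Mathlib

section
/- With A_z = I − e₁e₁ᵀ − e₅e₅ᵀ, the sum of the penalty matrices for the three coordinate axes equals the explicit matrix M: A_z + R_y(π/2)·A_z·R_y(π/2)ᵀ + X·A_z·Xᵀ = M, where M is the 7×7 matrix with M[0,0]=21/8, M[0,2]=M[2,0]=√15/8, M[2,2]=19/8, M[3,3]=3, M[4,4]=19/8, M[4,6]=M[6,4]=−√15/8, M[5,5]=2, M[6,6]=21/8, and all other entries 0. -/
open Matrix Real MeasureTheory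

noncomputable def Rz (γ : ℝ) : Matrix (Fin 7) (Fin 7) ℝ :=
  !![Real.cos (3*γ), 0, 0, 0, 0, 0, Real.sin (3*γ);
     0, Real.cos (2*γ), 0, 0, 0, Real.sin (2*γ), 0;
     0, 0, Real.cos γ, 0, Real.sin γ, 0, 0;
     0, 0, 0, 1, 0, 0, 0;
     0, 0, -Real.sin γ, 0, Real.cos γ, 0, 0;
     0, -Real.sin (2*γ), 0, 0, 0, Real.cos (2*γ), 0;
     -Real.sin (3*γ), 0, 0, 0, 0, 0, Real.cos (3*γ)]

noncomputable def X : Matrix (Fin 7) (Fin 7) ℝ :=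
  (1/4 : ℝ) • !![0, 0, 0, Real.sqrt 10, 0, -Real.sqrt 6, 0;
     0, -4, 0, 0, 0, 0, 0;
     0, 0, 0, Real.sqrt 6, 0, Real.sqrt 10, 0;
     -Real.sqrt 10, 0, -Real.sqrt 6, 0, 0, 0, 0;
     0, 0, 0, 0, -1, 0, -Real.sqrt 15;
     Real.sqrt 6, 0, -Real.sqrt 10, 0, 0, 0, 0;
     0, 0, 0, 0, -Real.sqrt 15, 0, 1]

noncomputable def Ry (β : ℝ) : Matrix (Fin 7) (Fin 7) ℝ := X * Rz β * Xᵀ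

noncomputable def e (i : Fin 7) : Fin 7 → ℝ := Pi.single i 1

noncomputable def Az : Matrix (Fin 7) (Fin 7) ℝ :=
  1 - vecMulVec (e 1) (e 1) - vecMulVec (e 5) (e 5)

noncomputable def M : Matrix (Fin 7) (Fin 7) ℝ :=
  !![21/8, 0, Real.sqrt 15 / 8, 0, 0, 0, 0;
     0, 0, 0, 0, 0, 0, 0;
     Real.sqrt 15 / 8, 0, 19/8, 0, 0, 0, 0;
     0, 0, 0, 3, 0, 0, 0;
     0, 0, 0, 0, 19/8, 0, -(Real.sqrt 15 / 8);
     0, 0, 0, 0, 0, 2, 0;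
     0, 0, 0, 0, -(Real.sqrt 15 / 8), 0, 21/8]

section CV
variable {α : Type*}
lemma cv2_2 (a : α) (u : Fin 2 → α) : Matrix.vecCons a u 2 = u 1 := rfl
lemma cv3_2 (a : α) (u : Fin 3 → α) : Matrix.vecCons a u 2 = u 1 := rfl
lemma cv3_3 (a : α) (u : Fin 3 → α) : Matrix.vecCons a u 3 = u 2 := rfl
lemma cv4_2 (a : α) (u : Fin 4 → α) : Matrix.vecCons a u 2 = u 1 := rfl
lemma cv4_3 (a : α) (u : Fin 4 → α) : Matrix.vecCons a u 3 = u 2 := rfl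
lemma cv4_4 (a : α) (u : Fin 4 → α) : Matrix.vecCons a u 4 = u 3 := rfl
lemma cv5_2 (a : α) (u : Fin 5 → α) : Matrix.vecCons a u 2 = u 1 := rfl
lemma cv5_3 (a : α) (u : Fin 5 → α) : Matrix.vecCons a u 3 = u 2 := rfl
lemma cv5_4 (a : α) (u : Fin 5 → α) : Matrix.vecCons a u 4 = u 3 := rfl
lemma cv5_5 (a : α) (u : Fin 5 → α) : Matrix.vecCons a u 5 = u 4 := rfl
lemma cv6_2 (a : α) (u : Fin 6 → α) : Matrix.vecCons a u 2 = u 1 := rfl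
lemma cv6_3 (a : α) (u : Fin 6 → α) : Matrix.vecCons a u 3 = u 2 := rfl
lemma cv6_4 (a : α) (u : Fin 6 → α) : Matrix.vecCons a u 4 = u 3 := rfl
lemma cv6_5 (a : α) (u : Fin 6 → α) : Matrix.vecCons a u 5 = u 4 := rfl
lemma cv6_6 (a : α) (u : Fin 6 → α) : Matrix.vecCons a u 6 = u 5 := rfl
end CV

lemma hRz : Rz (Real.pi / 2) =
    !![0,0,0,0,0,0,-1; 0,-1,0,0,0,0,0; 0,0,0,0,1,0,0; 0,0,0,1,0,0,0;
       0,0,-1,0,0,0,0; 0,0,0,0,0,-1,0; 1,0,0,0,0,0,0] := by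
  have h3 : (3 : ℝ) * (Real.pi / 2) = Real.pi + Real.pi / 2 := by ring
  have h2 : (2 : ℝ) * (Real.pi / 2) = Real.pi := by ring
  unfold Rz
  rw [h3, h2]
  simp [Real.cos_pi_div_two, Real.sin_pi_div_two, Real.cos_add, Real.sin_add]

lemma hAz : Az =
    !![1,0,0,0,0,0,0; 0,0,0,0,0,0,0; 0,0,1,0,0,0,0; 0,0,0,1,0,0,0;
       0,0,0,0,1,0,0; 0,0,0,0,0,0,0; 0,0,0,0,0,0,1] := by
  ext i j
  fin_cases i <;> fin_cases j <;>
    simp [Az, e, vecMulVec_apply, Matrix.one_apply, Pi.single_apply,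
      Matrix.cons_val_succ, Matrix.vecHead, Matrix.vecTail] <;> rfl

set_option maxHeartbeats 2000000 in
lemma hRy : Ry (Real.pi / 2) =
    !![1/4, 0, Real.sqrt 15/4, 0, 0, 0, 0;
       0, -1, 0, 0, 0, 0, 0;
       Real.sqrt 15/4, 0, -(1/4), 0, 0, 0, 0;
       0, 0, 0, 0, -(Real.sqrt 6/4), 0, Real.sqrt 10/4;
       0, 0, 0, Real.sqrt 6/4, 0, -(Real.sqrt 10/4), 0;
       0, 0, 0, 0, Real.sqrt 10/4, 0, Real.sqrt 6/4;
       0, 0, 0, -(Real.sqrt 10/4), 0, -(Real.sqrt 6/4), 0] := by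
  have h6 : Real.sqrt 6 * Real.sqrt 6 = 6 := Real.mul_self_sqrt (by norm_num)
  have h10 : Real.sqrt 10 * Real.sqrt 10 = 10 := Real.mul_self_sqrt (by norm_num)
  have h15 : Real.sqrt 15 * Real.sqrt 15 = 15 := Real.mul_self_sqrt (by norm_num)
  have h610 : Real.sqrt 6 * Real.sqrt 10 = 2 * Real.sqrt 15 := by
    rw [← Real.sqrt_mul (by norm_num : (0:ℝ) ≤ 6),
      show (6:ℝ)*10 = 2^2*15 by norm_num, Real.sqrt_mul (by positivity),
      Real.sqrt_sq (by norm_num)]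
  have h615 : Real.sqrt 6 * Real.sqrt 15 = 3 * Real.sqrt 10 := by
    rw [← Real.sqrt_mul (by norm_num : (0:ℝ) ≤ 6),
      show (6:ℝ)*15 = 3^2*10 by norm_num, Real.sqrt_mul (by positivity),
      Real.sqrt_sq (by norm_num)]
  have h1015 : Real.sqrt 10 * Real.sqrt 15 = 5 * Real.sqrt 6 := by
    rw [← Real.sqrt_mul (by norm_num : (0:ℝ) ≤ 10),
      show (10:ℝ)*15 = 5^2*6 by norm_num, Real.sqrt_mul (by positivity),
      Real.sqrt_sq (by norm_num)]
  rw [Ry, hRz]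
  ext i j
  fin_cases i <;> fin_cases j <;>
    (simp only [X, Matrix.mul_apply, Fin.sum_univ_seven, Matrix.transpose_apply,
      Matrix.smul_apply, smul_eq_mul, Matrix.cons_val', Matrix.cons_val_zero, Matrix.cons_val_one,
      Matrix.head_cons, Matrix.head_fin_const, Matrix.empty_val', Matrix.cons_val_fin_one,
      Matrix.vecHead, Matrix.vecTail, Function.comp, Matrix.of_apply, Matrix.add_apply,
      cv2_2, cv3_2, cv3_3, cv4_2, cv4_3, cv4_4, cv5_2, cv5_3, cv5_4, cv5_5,
      cv6_2, cv6_3, cv6_4, cv6_5, cv6_6]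
     try norm_num
     try ring_nf
     try norm_num
     try nlinarith [h6, h10, h15, h610, h615, h1015])

set_option maxHeartbeats 2000000 in
theorem cube_penalty_sum :
    Az + Ry (Real.pi / 2) * Az * (Ry (Real.pi / 2))ᵀ + X * Az * Xᵀ = M := by
  have h6 : Real.sqrt 6 * Real.sqrt 6 = 6 := Real.mul_self_sqrt (by norm_num)
  have h10 : Real.sqrt 10 * Real.sqrt 10 = 10 := Real.mul_self_sqrt (by norm_num)
  have h15 : Real.sqrt 15 * Real.sqrt 15 = 15 := Real.mul_self_sqrt (by norm_num)
  have h610 : Real.sqrt 6 * Real.sqrt 10 = 2 * Real.sqrt 15 := by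
    rw [← Real.sqrt_mul (by norm_num : (0:ℝ) ≤ 6),
      show (6:ℝ)*10 = 2^2*15 by norm_num, Real.sqrt_mul (by positivity),
      Real.sqrt_sq (by norm_num)]
  have h615 : Real.sqrt 6 * Real.sqrt 15 = 3 * Real.sqrt 10 := by
    rw [← Real.sqrt_mul (by norm_num : (0:ℝ) ≤ 6),
      show (6:ℝ)*15 = 3^2*10 by norm_num, Real.sqrt_mul (by positivity),
      Real.sqrt_sq (by norm_num)]
  have h1015 : Real.sqrt 10 * Real.sqrt 15 = 5 * Real.sqrt 6 := by
    rw [← Real.sqrt_mul (by norm_num : (0:ℝ) ≤ 10),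
      show (10:ℝ)*15 = 5^2*6 by norm_num, Real.sqrt_mul (by positivity),
      Real.sqrt_sq (by norm_num)]
  rw [hRy, hAz]
  ext i j
  fin_cases i <;> fin_cases j <;>
    (simp only [M, X, Matrix.mul_apply, Fin.sum_univ_seven, Matrix.transpose_apply,
      Matrix.smul_apply, smul_eq_mul, Matrix.cons_val', Matrix.cons_val_zero, Matrix.cons_val_one,
      Matrix.head_cons, Matrix.head_fin_const, Matrix.empty_val', Matrix.cons_val_fin_one,
      Matrix.vecHead, Matrix.vecTail, Function.comp, Matrix.of_apply, Matrix.add_apply,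
      cv2_2, cv3_2, cv3_3, cv4_2, cv4_3, cv4_4, cv5_2, cv5_3, cv5_4, cv5_5,
      cv6_2, cv6_3, cv6_4, cv6_5, cv6_6]
     try norm_num
     try ring_nf
     try norm_num
     try nlinarith [h6, h10, h15, h610, h615, h1015])
end

section
/- The kernel of the shifted matrix C − (1/2)·I is exactly the two-dimensional subspace spanned by e₁ and R_y(π/4)·e₁: for x ∈ ℝ⁷, (C − (1/2)·I)·x = 0 if and only if x is a linear combination of e₁ and R_y(π/4)·e₁. -/
open Matrix Real MeasureTheory

noncomputable def C : Matrix (Fin 7) (Fin 7) ℝ :=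
  !![13/16, 0, Real.sqrt 15 / 16, 0, 0, 0, 0;
     0, 1/2, 0, 0, 0, 0, 0;
     Real.sqrt 15 / 16, 0, 11/16, 0, 0, 0, 0;
     0, 0, 0, 49/64, 0, -(Real.sqrt 15 / 64), 0;
     0, 0, 0, 0, 103/128, 0, -(Real.sqrt 15 / 128);
     0, 0, 0, -(Real.sqrt 15 / 64), 0, 47/64, 0;
     0, 0, 0, 0, -(Real.sqrt 15 / 128), 0, 89/128]

/-! The matrix `C - (1/2) I` is block diagonal for the coordinate blocks `{1}`, `{0, 2}`, `{3, 5}`,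
`{4, 6}`. The `{1}` block vanishes, the `{3, 5}` and `{4, 6}` blocks have nonzero determinant,
and the `{0, 2}` block `[[5, √15], [√15, 3]] / 16` has rank one with kernel spanned by
`(-√6, √10) / 4`. That vector is `R_y(π/4) e₁`: `Xᵀ e₁ = -e₁`, `R_z(π/4)` sends `e₁` to `-e₅`,
and `X e₅` is column 5 of `X`. -/

lemma eq_zero_and_eq_zero_of_det_ne_zero {R : Type*} [CommRing R] [NoZeroDivisors R]
    {a b c d u v : R} (hdet : a * d - b * c ≠ 0) (h₁ : a * u + b * v = 0) (h₂ : c * u + d * v = 0) :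
    u = 0 ∧ v = 0 := by
  refine ⟨(mul_eq_zero.mp ?_).resolve_left hdet, (mul_eq_zero.mp ?_).resolve_left hdet⟩
  · linear_combination d * h₁ - b * h₂
  · linear_combination a * h₂ - c * h₁

lemma sqrt_fifteen_mul_sqrt_ten : √15 * √10 = 5 * √6 := by
  rw [← Real.sqrt_mul (by norm_num), show (15 : ℝ) * 10 = 5 ^ 2 * 6 by norm_num,
    Real.sqrt_mul (by positivity), Real.sqrt_sq (by norm_num)]

lemma transpose_X_mulVec_e_one : Xᵀ *ᵥ e 1 = -e 1 := by
  ext i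
  fin_cases i <;> simp [X, e, mulVec, dotProduct, Pi.single_apply]

lemma Rz_mulVec_e_one (γ : ℝ) : Rz γ *ᵥ e 1 = cos (2 * γ) • e 1 - sin (2 * γ) • e 5 := by
  ext i
  fin_cases i <;> simp [Rz, e, mulVec, dotProduct, Pi.single_apply]

lemma X_mulVec_e_five : X *ᵥ e 5 = ![-√6 / 4, 0, √10 / 4, 0, 0, 0, 0] := by
  ext i
  fin_cases i <;> simp [X, e, mulVec, dotProduct, Pi.single_apply] <;> ring

lemma Ry_pi_div_four_mulVec_e_one :
    Ry (π / 4) *ᵥ e 1 = ![-√6 / 4, 0, √10 / 4, 0, 0, 0, 0] := by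
  have hγ : 2 * (π / 4) = π / 2 := by ring
  rw [Ry, ← mulVec_mulVec, ← mulVec_mulVec, transpose_X_mulVec_e_one, mulVec_neg,
    Rz_mulVec_e_one, hγ, cos_pi_div_two, sin_pi_div_two, zero_smul, one_smul, zero_sub, neg_neg,
    X_mulVec_e_five]

lemma C_shifted_mulVec (x : Fin 7 → ℝ) :
    (C - (1/2 : ℝ) • (1 : Matrix (Fin 7) (Fin 7) ℝ)) *ᵥ x =
      ![(5 * x 0 + √15 * x 2) / 16, 0, (√15 * x 0 + 3 * x 2) / 16,
        (17 * x 3 - √15 * x 5) / 64, (39 * x 4 - √15 * x 6) / 128,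
        (-√15 * x 3 + 15 * x 5) / 64, (-√15 * x 4 + 25 * x 6) / 128] := by
  rw [sub_mulVec, smul_mulVec, one_mulVec]
  ext i
  fin_cases i <;> simp [C, dotProduct, Fin.sum_univ_seven] <;> ring

lemma C_shifted_mulVec_eq_zero_iff (x : Fin 7 → ℝ) :
    (C - (1/2 : ℝ) • (1 : Matrix (Fin 7) (Fin 7) ℝ)) *ᵥ x = 0 ↔
      5 * x 0 + √15 * x 2 = 0 ∧ x 3 = 0 ∧ x 4 = 0 ∧ x 5 = 0 ∧ x 6 = 0 := by
  have hsq : √15 * √15 = 15 := Real.mul_self_sqrt (by norm_num)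
  rw [C_shifted_mulVec]
  constructor
  · intro h
    have h0 := congrFun h 0
    have h3 := congrFun h 3
    have h4 := congrFun h 4
    have h5 := congrFun h 5
    have h6 := congrFun h 6
    simp only [Fin.isValue, cons_val, Pi.zero_apply, div_eq_zero_iff, OfNat.ofNat_ne_zero,
      or_false] at h0 h3 h4 h5 h6
    obtain ⟨hx3, hx5⟩ := eq_zero_and_eq_zero_of_det_ne_zero (a := 17) (b := -√15) (c := -√15)
      (d := 15) (u := x 3) (v := x 5) (by rw [neg_mul_neg, hsq]; norm_num)
      (by linear_combination h3) (by linear_combination h5)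
    obtain ⟨hx4, hx6⟩ := eq_zero_and_eq_zero_of_det_ne_zero (a := 39) (b := -√15) (c := -√15)
      (d := 25) (u := x 4) (v := x 6) (by rw [neg_mul_neg, hsq]; norm_num)
      (by linear_combination h4) (by linear_combination h6)
    exact ⟨h0, hx3, hx4, hx5, hx6⟩
  · rintro ⟨h02, h3, h4, h5, h6⟩
    have h2 : √15 * x 0 + 3 * x 2 = 0 := by linear_combination √15 / 5 * h02 - x 2 / 5 * hsq
    ext i
    fin_cases i <;> simp [h02, h2, h3, h4, h5, h6]

theorem C_shifted_kernel (x : Fin 7 → ℝ) :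
    (C - (1/2 : ℝ) • (1 : Matrix (Fin 7) (Fin 7) ℝ)) *ᵥ x = 0 ↔
      ∃ a b : ℝ, x = a • e 1 + b • (Ry (Real.pi / 4) *ᵥ e 1) := by
  rw [C_shifted_mulVec_eq_zero_iff, Ry_pi_div_four_mulVec_e_one]
  constructor
  · rintro ⟨h02, h3, h4, h5, h6⟩
    have hx0 : 4 / √10 * x 2 * (-√6 / 4) = x 0 := by
      field_simp
      linear_combination -(√10 / 5) * h02 + x 2 / 5 * sqrt_fifteen_mul_sqrt_ten
    have hx2 : 4 / √10 * x 2 * (√10 / 4) = x 2 := by field_simp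
    refine ⟨x 1, 4 / √10 * x 2, ?_⟩
    ext i
    fin_cases i <;> simp [e, hx0, hx2, h3, h4, h5, h6]
  · rintro ⟨a, b, rfl⟩
    have hv : 5 * (-√6 / 4) + √15 * (√10 / 4) = 0 := by
      linear_combination sqrt_fifteen_mul_sqrt_ten / 4
    simpa [e, mul_left_comm _ b, ← mul_add] using Or.inr hv
end
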